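/- Let Σ be a real symmetric positive semidefinite p×p matrix, M a real p×K matrix, and θ ∈ ℝ^K. Let a_k denote the k-th column of A. Let U₂ be a real p×K matrix with orthonormal columns whose column span equals the column span of X(X^⊤X)⁻¹A, and let U₃ be a real p×(p−n) matrix with orthonormal columns satisfying U₃U₃^⊤ = I_p − X(X^⊤X)⁻¹X^⊤. Define v_k = ‖θ‖² · a_k^⊤(X^⊤X)⁻¹X^⊤ Σ X(X^⊤X)⁻¹a_k and w_k = a_k^⊤(X^⊤X)⁻¹a_k · [‖θ‖² · trace(U₃^⊤ Σ U₃) + θ^⊤M^⊤U₃U₃^⊤Mθ] / (p−n). Then for every k, v_k − w_k ≥ ‖θ‖² · a_k^⊤(X^⊤X)⁻¹a_k · [λ_min(U₂^⊤ Σ U₂) − trace(U₃^⊤ Σ U₃)/(p−n) − trace(U₃^⊤ M M^⊤ U₃)/(p−n)], where λ_min denotes the smallest eigenvalue of a symmetric matrix. -/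

import Mathlib

open Matrix

/-!
Write `B = (XᵀX)⁻¹`, `a = a_k` and `u = X B a`. Then `v_k = ‖θ‖² uᵀΣu` and `aᵀBa = uᵀu`, while `u`
lies in the column span of `U₂`; since `U₂` is an isometry, `uᵀΣu ≥ λ_min(U₂ᵀΣU₂) uᵀu`. The
`trace(U₃ᵀΣU₃)` terms cancel, and the remaining term of `w_k` is controlled by Cauchy–Schwarz:
`θᵀMᵀU₃U₃ᵀMθ = ‖U₃ᵀMθ‖² ≤ ‖U₃ᵀM‖_F² ‖θ‖²`.
-/

namespace Matrix

variable {m l : Type*} [Fintype m] [Fintype l]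

lemma dotProduct_transpose_mul_mul_mulVec (P : Matrix m l ℝ) (S : Matrix m m ℝ) (x : l → ℝ) :
    x ⬝ᵥ (Pᵀ * S * P) *ᵥ x = P *ᵥ x ⬝ᵥ S *ᵥ (P *ᵥ x) := by
  rw [← mulVec_mulVec, ← mulVec_mulVec, dotProduct_mulVec, ← mulVec_transpose, transpose_transpose]

lemma dotProduct_transpose_mul_self_mulVec_le (N : Matrix m l ℝ) (x : l → ℝ) :
    x ⬝ᵥ (Nᵀ * N) *ᵥ x ≤ (N * Nᵀ).trace * (x ⬝ᵥ x) := by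
  rw [← mulVec_mulVec, dotProduct_mulVec, vecMul_transpose]
  simp only [dotProduct, mulVec, trace, diag, mul_apply, transpose_apply]
  refine (Finset.sum_le_sum fun i _ => ?_).trans_eq (Finset.sum_mul ..).symm
  simpa only [sq] using Finset.sum_mul_sq_le_sq_mul_sq Finset.univ (N i) x

open scoped MatrixOrder in
lemma IsHermitian.iInf_eigenvalues_mul_dotProduct_self_le [DecidableEq m] {H : Matrix m m ℝ}
    (hH : H.IsHermitian) (c : m → ℝ) :
    (⨅ i, hH.eigenvalues i) * (c ⬝ᵥ c) ≤ c ⬝ᵥ H *ᵥ c := by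
  have hle : algebraMap ℝ (Matrix m m ℝ) (⨅ i, hH.eigenvalues i) ≤ H := by
    rw [algebraMap_le_iff_le_spectrum hH.isSelfAdjoint, hH.spectrum_real_eq_range_eigenvalues]
    rintro _ ⟨i, rfl⟩
    exact ciInf_le (Finite.bddBelow_range _) i
  simpa [sub_mulVec, Algebra.algebraMap_eq_smul_one, smul_mulVec, dotProduct_smul] using
    (le_iff.mp hle).dotProduct_mulVec_nonneg c

lemma iInf_eigenvalues_mul_dotProduct_self_le_of_mem_range [DecidableEq l] {U : Matrix m l ℝ}
    (hU : Uᵀ * U = 1) {S : Matrix m m ℝ} (hH : (Uᵀ * S * U).IsHermitian) {u : m → ℝ}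
    (hu : u ∈ LinearMap.range U.mulVecLin) :
    (⨅ i, hH.eigenvalues i) * (u ⬝ᵥ u) ≤ u ⬝ᵥ S *ᵥ u := by
  classical
  obtain ⟨c, rfl⟩ := hu
  have hnorm : c ⬝ᵥ c = U *ᵥ c ⬝ᵥ U *ᵥ c := by
    simpa [hU] using dotProduct_transpose_mul_mul_mulVec U 1 c
  simpa only [mulVecLin_apply, ← hnorm, dotProduct_transpose_mul_mul_mulVec] using
    hH.iInf_eigenvalues_mul_dotProduct_self_le c

lemma transpose_mul_inv_transpose_mul_self {n : Type*} [Fintype n] [DecidableEq n]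
    (X : Matrix m n ℝ) : (X * (Xᵀ * X)⁻¹)ᵀ = (Xᵀ * X)⁻¹ * Xᵀ := by
  rw [transpose_mul, transpose_nonsing_inv, transpose_mul, transpose_transpose]

lemma transpose_mul_inv_transpose_mul_self_mul {n : Type*} [Fintype n] [DecidableEq n]
    {X : Matrix m n ℝ} (hX : IsUnit (Xᵀ * X)) :
    (X * (Xᵀ * X)⁻¹)ᵀ * (X * (Xᵀ * X)⁻¹) = (Xᵀ * X)⁻¹ := by
  rw [transpose_mul_inv_transpose_mul_self, Matrix.mul_assoc, ← Matrix.mul_assoc Xᵀ,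
    ← Matrix.mul_assoc, nonsing_inv_mul _ ((isUnit_iff_isUnit_det _).mp hX), Matrix.one_mul]

end Matrix

lemma EuclideanSpace.norm_sq_eq_dotProduct_self {ι : Type*} [Fintype ι]
    (x : EuclideanSpace ℝ ι) : ‖x‖ ^ 2 = x ⬝ᵥ x := by
  rw [← real_inner_self_eq_norm_sq, EuclideanSpace.inner_eq_star_dotProduct, star_trivial]

theorem stmt_9_general (p n K : ℕ) (hnp : n < p)
    (X : Matrix (Fin p) (Fin n) ℝ) (A : Matrix (Fin n) (Fin K) ℝ)
    (hX : IsUnit (Xᵀ * X))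
    (Sg : Matrix (Fin p) (Fin p) ℝ)
    (M : Matrix (Fin p) (Fin K) ℝ)
    (θ : EuclideanSpace ℝ (Fin K))
    (U₂ : Matrix (Fin p) (Fin K) ℝ) (hU₂o : U₂ᵀ * U₂ = 1)
    (hU₂span : LinearMap.range (Matrix.mulVecLin U₂)
      = LinearMap.range (Matrix.mulVecLin (X * (Xᵀ * X)⁻¹ * A)))
    (U₃ : Matrix (Fin p) (Fin (p - n)) ℝ)
    (hH : (U₂ᵀ * Sg * U₂).IsHermitian) :
    ∀ k : Fin K,
      ‖θ‖ ^ 2 * ((fun i => A i k) ⬝ᵥ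
          ((Xᵀ * X)⁻¹ * Xᵀ * Sg * X * (Xᵀ * X)⁻¹).mulVec (fun i => A i k))
        - ((fun i => A i k) ⬝ᵥ ((Xᵀ * X)⁻¹).mulVec (fun i => A i k)) *
          (‖θ‖ ^ 2 * (U₃ᵀ * Sg * U₃).trace
            + θ ⬝ᵥ (Mᵀ * U₃ * U₃ᵀ * M).mulVec θ) / ((p : ℝ) - (n : ℝ))
      ≥ ‖θ‖ ^ 2 * ((fun i => A i k) ⬝ᵥ ((Xᵀ * X)⁻¹).mulVec (fun i => A i k)) *
          ((⨅ i, hH.eigenvalues i) - (U₃ᵀ * Sg * U₃).trace / ((p : ℝ) - (n : ℝ))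
            - (U₃ᵀ * M * Mᵀ * U₃).trace / ((p : ℝ) - (n : ℝ))) := by
  intro k
  set a : Fin n → ℝ := fun i => A i k
  set u := (X * (Xᵀ * X)⁻¹) *ᵥ a
  have hβ : a ⬝ᵥ (Xᵀ * X)⁻¹ *ᵥ a = u ⬝ᵥ u := by
    have h := dotProduct_transpose_mul_mul_mulVec (X * (Xᵀ * X)⁻¹) 1 a
    rwa [Matrix.mul_one, transpose_mul_inv_transpose_mul_self_mul hX, one_mulVec] at h
  have hv : a ⬝ᵥ ((Xᵀ * X)⁻¹ * Xᵀ * Sg * X * (Xᵀ * X)⁻¹) *ᵥ a = u ⬝ᵥ Sg *ᵥ u := by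
    rw [← dotProduct_transpose_mul_mul_mulVec, transpose_mul_inv_transpose_mul_self]
    simp only [Matrix.mul_assoc]
  have hu : u ∈ LinearMap.range U₂.mulVecLin := by
    rw [hU₂span]
    exact ⟨Pi.single k 1, by rw [mulVecLin_apply, ← mulVec_mulVec, mulVec_single_one]; rfl⟩
  have hq : θ ⬝ᵥ (Mᵀ * U₃ * U₃ᵀ * M) *ᵥ θ ≤ (U₃ᵀ * M * Mᵀ * U₃).trace * ‖θ‖ ^ 2 := by
    have h := dotProduct_transpose_mul_self_mulVec_le (U₃ᵀ * M) θ
    simp only [transpose_mul, transpose_transpose, Matrix.mul_assoc] at h ⊢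
    rwa [EuclideanSpace.norm_sq_eq_dotProduct_self]
  have hd : (0 : ℝ) < p - n := sub_pos.2 (by exact_mod_cast hnp)
  have hRayleigh := mul_le_mul_of_nonneg_left
    (iInf_eigenvalues_mul_dotProduct_self_le_of_mem_range hU₂o hH hu) (sq_nonneg ‖θ‖)
  have hCS := div_nonneg
    (mul_nonneg (by simpa using dotProduct_self_star_nonneg u) (sub_nonneg.2 hq)) hd.le
  rw [hβ, hv]
  linear_combination hRayleigh + hCS

/-- Lower bound on the bias `v_k − w_k` of the RTS squared standard errors in
the general source apportionment model. -/
theorem stmt_9 (p n K : ℕ) (hK : 0 < K) (hKn : K ≤ n) (hnp : n < p)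
    (X : Matrix (Fin p) (Fin n) ℝ) (A : Matrix (Fin n) (Fin K) ℝ)
    (hX : IsUnit (Xᵀ * X)) (hA : IsUnit (Aᵀ * A))
    (Sg : Matrix (Fin p) (Fin p) ℝ) (hSg : Sg.PosSemidef)
    (M : Matrix (Fin p) (Fin K) ℝ)
    (θ : EuclideanSpace ℝ (Fin K))
    (U₂ : Matrix (Fin p) (Fin K) ℝ) (hU₂o : U₂ᵀ * U₂ = 1)
    (hU₂span : LinearMap.range (Matrix.mulVecLin U₂)
      = LinearMap.range (Matrix.mulVecLin (X * (Xᵀ * X)⁻¹ * A)))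
    (U₃ : Matrix (Fin p) (Fin (p - n)) ℝ) (hU₃o : U₃ᵀ * U₃ = 1)
    (hU₃ : U₃ * U₃ᵀ = 1 - X * (Xᵀ * X)⁻¹ * Xᵀ)
    (hH : (U₂ᵀ * Sg * U₂).IsHermitian) :
    ∀ k : Fin K,
      ‖θ‖ ^ 2 * ((fun i => A i k) ⬝ᵥ
          ((Xᵀ * X)⁻¹ * Xᵀ * Sg * X * (Xᵀ * X)⁻¹).mulVec (fun i => A i k))
        - ((fun i => A i k) ⬝ᵥ ((Xᵀ * X)⁻¹).mulVec (fun i => A i k)) *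
          (‖θ‖ ^ 2 * (U₃ᵀ * Sg * U₃).trace
            + θ ⬝ᵥ (Mᵀ * U₃ * U₃ᵀ * M).mulVec θ) / ((p : ℝ) - (n : ℝ))
      ≥ ‖θ‖ ^ 2 * ((fun i => A i k) ⬝ᵥ ((Xᵀ * X)⁻¹).mulVec (fun i => A i k)) *
          ((⨅ i, hH.eigenvalues i) - (U₃ᵀ * Sg * U₃).trace / ((p : ℝ) - (n : ℝ))
            - (U₃ᵀ * M * Mᵀ * U₃).trace / ((p : ℝ) - (n : ℝ))) :=
  stmt_9_general p n K hnp X A hX Sg M θ U₂ hU₂o hU₂span U₃ hH
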